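/- arXiv:math/0603341 — 2 statements merged into one kernel-verified Lean document; each statement's English description precedes it below -/
import Mathlib

section
/- Let ν_1, …, ν_n be Borel probability measures on ℝ, each with ∫ x ν_j(dx) = 0 and 0 < σ_j² := ∫ x² ν_j(dx) < ∞, and for each j let (H^j_l)_{l∈ℕ} be an orthonormal basis of L²(ν_j) with H^j_0 ≡ 1 and H^j_1(x) = x/σ_j. Let μ = ν_1 ⊗ ⋯ ⊗ ν_n, let F : ℝⁿ × ℝ × ℝⁿ → ℝⁿ be measurable, let Δt > 0, a ∈ ℝⁿ, and let f : ℝⁿ → ℝ be bounded measurable. Then in L²(μ) the function x ↦ f(a + F(a, Δt, x)) - f(a) equals Σ_{j=1}^n (1/σ_j²)(∫ f(a + F(a, Δt, y)) y_j μ(dy)) · (x ↦ x_j) + (∫ (f(a + F(a, Δt, y)) - f(a)) μ(dy)) · 1 + Σ_{(l_1,…,l_n): l_1+⋯+l_n ≥ 2} (∫ f(a + F(a, Δt, y)) H^1_{l_1}(y_1)⋯H^n_{l_n}(y_n) μ(dy)) · (x ↦ H^1_{l_1}(x_1)⋯H^n_{l_n}(x_n)), with the series converging in L²(μ). -/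
open MeasureTheory
open scoped ENNReal

namespace DIto

variable {n : ℕ} {ν : Fin n → Measure ℝ} [∀ j, IsProbabilityMeasure (ν j)]

lemma map_eval (j : Fin n) : (Measure.pi ν).map (Function.eval j) = ν j := by
  ext s hs
  rw [Measure.map_apply (measurable_pi_apply j) hs, ← Set.univ_pi_update_univ, Measure.pi_pi]
  rw [Finset.prod_eq_single j (fun i _ hij => by simp [Function.update_of_ne hij]) (by simp)]
  simp

lemma ae_comp {j : Fin n} {f g : ℝ → ℝ} (h : f =ᵐ[ν j] g) :
    (fun x : Fin n → ℝ => f (x j)) =ᵐ[Measure.pi ν] fun x => g (x j) :=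
  Measure.tendsto_eval_ae_ae.eventually h

lemma memLp_comp {j : Fin n} {φ : ℝ → ℝ} (hφ : MemLp φ 2 (ν j)) :
    MemLp (fun x : Fin n → ℝ => φ (x j)) 2 (Measure.pi ν) := by
  have := (memLp_map_measure_iff (μ := Measure.pi ν) (f := Function.eval j) (g := φ)
      (by rw [map_eval]; exact hφ.aestronglyMeasurable)
      (measurable_pi_apply j).aemeasurable).mp (by rwa [map_eval])
  exact this

lemma integral_comp {j : Fin n} {φ : ℝ → ℝ} (hφ : AEStronglyMeasurable φ (ν j)) :
    ∫ x, φ (x j) ∂Measure.pi ν = ∫ t, φ t ∂ν j := by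
  rw [← integral_map (measurable_pi_apply j).aemeasurable (by rwa [map_eval]), map_eval]

lemma integral_prod (f : Fin n → ℝ → ℝ) :
    ∫ x, ∏ i, f i (x i) ∂Measure.pi ν = ∏ i, ∫ t, f i t ∂ν i := by
  have := integral_fintype_prod_eq_prod (𝕜 := ℝ) (ι := Fin n) (E := fun _ => ℝ) f (μ := ν)
  exact this

lemma integrable_prod {f : Fin n → ℝ → ℝ} (h : ∀ i, Integrable (f i) (ν i)) :
    Integrable (fun x : Fin n → ℝ => ∏ i, f i (x i)) (Measure.pi ν) := by
  have := Integrable.fintype_prod_dep (𝕜 := ℝ) (ι := Fin n) (E := fun _ => ℝ) (f := f) (μ := ν) h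
  exact this

lemma memLp_prod {f : Fin n → ℝ → ℝ} (h : ∀ i, MemLp (f i) 2 (ν i)) :
    MemLp (fun x : Fin n → ℝ => ∏ i, f i (x i)) 2 (Measure.pi ν) := by
  have hm : AEStronglyMeasurable (fun x : Fin n → ℝ => ∏ i, f i (x i)) (Measure.pi ν) :=
    Finset.aestronglyMeasurable_fun_prod _ fun i _ => (memLp_comp (h i)).aestronglyMeasurable
  rw [memLp_two_iff_integrable_sq hm]
  have : Integrable (fun x : Fin n → ℝ => ∏ i, (fun t => f i t ^ 2) (x i)) (Measure.pi ν) :=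
    integrable_prod fun i => (memLp_two_iff_integrable_sq (h i).aestronglyMeasurable).mp (h i)
  simpa [Finset.prod_pow] using this

lemma integrable_mul2 {α : Type*} [MeasurableSpace α] {μ : Measure α} {u v : α → ℝ}
    (hu : MemLp u 2 μ) (hv : MemLp v 2 μ) : Integrable (fun x => u x * v x) μ := by
  have := L2.integrable_inner (𝕜 := ℝ) (hu.toLp u) (hv.toLp v)
  refine this.congr ?_
  exact (hu.coeFn_toLp.and hv.coeFn_toLp).mono fun x ⟨h1, h2⟩ => by
    simp [h1, h2, RCLike.inner_apply, mul_comm]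

lemma inner_toLp {α : Type*} [MeasurableSpace α] {μ : Measure α} {u v : α → ℝ}
    (hu : MemLp u 2 μ) (hv : MemLp v 2 μ) :
    @inner ℝ _ _ (hu.toLp u) (hv.toLp v) = ∫ x, u x * v x ∂μ := by
  rw [L2.inner_def]
  refine integral_congr_ae ?_
  exact (hu.coeFn_toLp.and hv.coeFn_toLp).mono fun x ⟨h1, h2⟩ => by
    simp [h1, h2, RCLike.inner_apply, mul_comm]

lemma key_induction (H : Fin n → ℕ → ℝ → ℝ) (hH : ∀ j l, MemLp (H j l) 2 (ν j))
    (hcomplete : ∀ j, (Submodule.span ℝ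
        (Set.range fun l => (hH j l).toLp (H j l))).topologicalClosure = ⊤)
    (h : Lp ℝ 2 (Measure.pi ν))
    (h0 : ∀ l : Fin n → ℕ,
      ∫ x, (∏ j, H j (l j) (x j)) * h x ∂Measure.pi ν = 0) :
    ∀ (s : Finset (Fin n)) (φ : ∀ j : Fin n, Lp ℝ 2 (ν j)) (l : Fin n → ℕ),
      ∫ x, (∏ j, (if j ∈ s then (φ j : ℝ → ℝ) (x j) else H j (l j) (x j))) * h x
        ∂Measure.pi ν = 0 := by
  classical
  intro s
  induction s using Finset.induction_on with
  | empty => intro φ l; simpa using h0 l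
  | @insert j₀ s hj₀ ih =>
    intro φ l
    -- the fixed factors
    have hηm : ∀ j, MemLp (if j ∈ s then (φ j : ℝ → ℝ) else H j (l j)) 2 (ν j) := by
      intro j
      by_cases hj : j ∈ s <;> simp only [hj, if_true, if_false]
      · exact Lp.memLp (φ j)
      · exact hH j (l j)
    have Pmem : ∀ (w : ℝ → ℝ), MemLp w 2 (ν j₀) → MemLp
        (fun x : Fin n → ℝ => ∏ j, (if j = j₀ then w
          else if j ∈ s then (φ j : ℝ → ℝ) else H j (l j)) (x j)) 2 (Measure.pi ν) := by
      intro w hw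
      refine memLp_prod (fun j => ?_)
      by_cases hj : j = j₀
      · subst hj; simpa using hw
      · simpa [hj] using hηm j
    have Pu : ∀ u : Lp ℝ 2 (ν j₀), MemLp
        (fun x : Fin n → ℝ => ∏ j, (if j = j₀ then (u : ℝ → ℝ)
          else if j ∈ s then (φ j : ℝ → ℝ) else H j (l j)) (x j)) 2 (Measure.pi ν) :=
      fun u => Pmem _ (Lp.memLp u)
    set Tf : Lp ℝ 2 (ν j₀) → ℝ := fun u => @inner ℝ _ _ ((Pu u).toLp _) h with hTf
    have Tval : ∀ u, Tf u = ∫ x, (∏ j, (if j = j₀ then (u : ℝ → ℝ)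
        else if j ∈ s then (φ j : ℝ → ℝ) else H j (l j)) (x j)) * h x ∂Measure.pi ν := by
      intro u
      rw [hTf]
      simp only
      rw [L2.inner_def]
      refine integral_congr_ae (((Pu u).coeFn_toLp).mono fun x hx => ?_)
      simp [hx, RCLike.inner_apply, mul_comm]
    -- splitting off the j₀ factor
    have Psplit : ∀ (w : ℝ → ℝ) (x : Fin n → ℝ),
        (∏ j, (if j = j₀ then w
          else if j ∈ s then (φ j : ℝ → ℝ) else H j (l j)) (x j))
        = w (x j₀) * ∏ j ∈ Finset.univ.erase j₀,
            (if j ∈ s then (φ j : ℝ → ℝ) else H j (l j)) (x j) := by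
      intro w x
      rw [← Finset.mul_prod_erase Finset.univ _ (Finset.mem_univ j₀)]
      rw [if_pos rfl]
      congr 1
      refine Finset.prod_congr rfl fun j hj => by
        rw [if_neg (Finset.ne_of_mem_erase hj)]
    have hadd : ∀ u v, Tf (u + v) = Tf u + Tf v := by
      intro u v
      have h1 : (Pu (u + v)).toLp _ = (Pu u).toLp _ + (Pu v).toLp _ := by
        rw [← MemLp.toLp_add]
        refine MemLp.toLp_congr _ _ ?_
        have hc : ∀ᵐ x ∂Measure.pi ν, (⇑(u + v)) (x j₀) = (⇑u) (x j₀) + (⇑v) (x j₀) :=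
          ae_comp (Lp.coeFn_add u v)
        refine hc.mono fun x hx => ?_
        simp only [Pi.add_apply, Psplit, hx]
        ring
      rw [hTf]; simp only [h1, inner_add_left]
    have hsmul : ∀ (c : ℝ) (u), Tf (c • u) = c * Tf u := by
      intro c u
      have h1 : (Pu (c • u)).toLp _ = c • (Pu u).toLp _ := by
        rw [← MemLp.toLp_const_smul]
        refine MemLp.toLp_congr _ _ ?_
        have hc : ∀ᵐ x ∂Measure.pi ν, (⇑(c • u)) (x j₀) = c * (⇑u) (x j₀) :=
          ae_comp (Lp.coeFn_smul c u)
        refine hc.mono fun x hx => ?_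
        simp only [Pi.smul_apply, smul_eq_mul, Psplit, hx]
        ring
      rw [hTf]; simp only [h1, real_inner_smul_left]
    -- boundedness
    set M : ℝ := ∏ j ∈ Finset.univ.erase j₀,
        ∫ t, ((if j ∈ s then (φ j : ℝ → ℝ) else H j (l j)) t)
          * ((if j ∈ s then (φ j : ℝ → ℝ) else H j (l j)) t) ∂ν j with hM
    have hMnn : 0 ≤ M :=
      Finset.prod_nonneg fun j _ => integral_nonneg fun t => mul_self_nonneg _
    have hbound : ∀ u, ‖Tf u‖ ≤ (Real.sqrt M * ‖h‖) * ‖u‖ := by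
      intro u
      have h1 : ‖Tf u‖ ≤ ‖(Pu u).toLp _‖ * ‖h‖ := norm_inner_le_norm _ _
      have h2 : @inner ℝ _ _ ((Pu u).toLp _) ((Pu u).toLp _) = M * (‖u‖ * ‖u‖) := by
        rw [inner_toLp (Pu u) (Pu u)]
        have hsq : ∀ x : Fin n → ℝ, (∏ j, (if j = j₀ then (u : ℝ → ℝ)
              else if j ∈ s then (φ j : ℝ → ℝ) else H j (l j)) (x j))
            * (∏ j, (if j = j₀ then (u : ℝ → ℝ)
              else if j ∈ s then (φ j : ℝ → ℝ) else H j (l j)) (x j))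
            = ∏ j, (((if j = j₀ then (u : ℝ → ℝ)
              else if j ∈ s then (φ j : ℝ → ℝ) else H j (l j)) (x j))
                * ((if j = j₀ then (u : ℝ → ℝ)
              else if j ∈ s then (φ j : ℝ → ℝ) else H j (l j)) (x j))) := by
          intro x
          rw [← Finset.prod_mul_distrib]
        have hip := integral_prod (ν := ν) (fun j t =>
          ((if j = j₀ then (u : ℝ → ℝ)
              else if j ∈ s then (φ j : ℝ → ℝ) else H j (l j)) t)
            * ((if j = j₀ then (u : ℝ → ℝ)
              else if j ∈ s then (φ j : ℝ → ℝ) else H j (l j)) t))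
        rw [integral_congr_ae (Filter.Eventually.of_forall hsq), hip]
        rw [← Finset.mul_prod_erase Finset.univ _ (Finset.mem_univ j₀)]
        simp only [eq_self_iff_true, if_true]
        have hu2 : ∫ t, (u : ℝ → ℝ) t * (u : ℝ → ℝ) t ∂ν j₀ = ‖u‖ * ‖u‖ := by
          rw [← real_inner_self_eq_norm_mul_norm, L2.inner_def]
          refine integral_congr_ae (Filter.Eventually.of_forall fun t => ?_)
          simp [RCLike.inner_apply, sq]
        rw [hu2, hM]
        have : ∀ j ∈ Finset.univ.erase j₀,
            (∫ t, ((if j = j₀ then (u : ℝ → ℝ)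
              else if j ∈ s then (φ j : ℝ → ℝ) else H j (l j)) t)
                * ((if j = j₀ then (u : ℝ → ℝ)
              else if j ∈ s then (φ j : ℝ → ℝ) else H j (l j)) t) ∂ν j)
            = ∫ t, ((if j ∈ s then (φ j : ℝ → ℝ) else H j (l j)) t)
                * ((if j ∈ s then (φ j : ℝ → ℝ) else H j (l j)) t) ∂ν j := by
          intro j hj
          rw [if_neg (Finset.ne_of_mem_erase hj)]
        rw [Finset.prod_congr rfl this]
        ring
      have h3 : ‖(Pu u).toLp _‖ = Real.sqrt M * ‖u‖ := by
        have h4 : ‖(Pu u).toLp _‖ * ‖(Pu u).toLp _‖ = M * (‖u‖ * ‖u‖) := by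
          rw [← real_inner_self_eq_norm_mul_norm]; exact h2
        calc ‖(Pu u).toLp _‖ = Real.sqrt (‖(Pu u).toLp _‖ * ‖(Pu u).toLp _‖) :=
              (Real.sqrt_mul_self (norm_nonneg _)).symm
          _ = Real.sqrt (M * (‖u‖ * ‖u‖)) := by rw [h4]
          _ = Real.sqrt M * Real.sqrt (‖u‖ * ‖u‖) := Real.sqrt_mul hMnn _
          _ = Real.sqrt M * ‖u‖ := by rw [Real.sqrt_mul_self (norm_nonneg _)]
      refine h1.trans (le_of_eq ?_)
      rw [h3]; ring
    -- the continuous linear functional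
    set L : Lp ℝ 2 (ν j₀) →L[ℝ] ℝ :=
      LinearMap.mkContinuous
        { toFun := Tf
          map_add' := hadd
          map_smul' := by intro c u; simpa using hsmul c u }
        (Real.sqrt M * ‖h‖) hbound with hL
    have hLapp : ∀ u, L u = Tf u := fun u => rfl
    -- basis elements are in the kernel
    have hker : ∀ l₀ : ℕ, (hH j₀ l₀).toLp (H j₀ l₀) ∈ L.ker := by
      intro l₀
      rw [LinearMap.mem_ker, ContinuousLinearMap.coe_coe, hLapp, Tval]
      have hih := ih φ (Function.update l j₀ l₀)
      rw [← hih]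
      have hc : ∀ᵐ x ∂Measure.pi ν,
          (⇑((hH j₀ l₀).toLp (H j₀ l₀))) (x j₀) = H j₀ l₀ (x j₀) :=
        ae_comp (hH j₀ l₀).coeFn_toLp
      refine integral_congr_ae (hc.mono fun x hx => ?_)
      dsimp only
      congr 1
      refine Finset.prod_congr rfl fun j _ => ?_
      by_cases hj : j = j₀
      · subst hj
        rw [if_pos rfl, if_neg hj₀, Function.update_self]
        exact hx
      · rw [if_neg hj, Function.update_of_ne hj]
        by_cases hjs : j ∈ s
        · rw [if_pos hjs, if_pos hjs]
        · rw [if_neg hjs, if_neg hjs]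
    -- density
    have hsp : Submodule.span ℝ (Set.range fun l₀ => (hH j₀ l₀).toLp (H j₀ l₀))
        ≤ L.ker := by
      rw [Submodule.span_le]
      rintro _ ⟨l₀, rfl⟩
      exact hker l₀
    have htop := Submodule.topologicalClosure_minimal _ hsp
      (ContinuousLinearMap.isClosed_ker L)
    rw [hcomplete j₀] at htop
    have hφ0 : Tf (φ j₀) = 0 := by
      have : φ j₀ ∈ L.ker := htop Submodule.mem_top
      rwa [LinearMap.mem_ker, ContinuousLinearMap.coe_coe, hLapp] at this
    rw [Tval] at hφ0
    rw [← hφ0]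
    refine integral_congr_ae (Filter.Eventually.of_forall fun x => ?_)
    dsimp only
    congr 1
    refine Finset.prod_congr rfl fun j _ => ?_
    by_cases hj : j = j₀
    · subst hj
      rw [if_pos (Finset.mem_insert_self j s), if_pos rfl]
    · rw [if_neg hj]
      by_cases hjs : j ∈ s
      · rw [if_pos hjs, if_pos (Finset.mem_insert_of_mem hjs)]
      · rw [if_neg hjs, if_neg (by simp [Finset.mem_insert, hj, hjs])]







lemma dense_zero (H : Fin n → ℕ → ℝ → ℝ) (hH : ∀ j l, MemLp (H j l) 2 (ν j))
    (hcomplete : ∀ j, (Submodule.span ℝ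
        (Set.range fun l => (hH j l).toLp (H j l))).topologicalClosure = ⊤)
    (h : Lp ℝ 2 (Measure.pi ν))
    (h0 : ∀ l : Fin n → ℕ,
      ∫ x, (∏ j, H j (l j) (x j)) * h x ∂Measure.pi ν = 0) :
    h = 0 := by
  classical
  have hInt : Integrable (⇑h) (Measure.pi ν) := (Lp.memLp h).integrable (by norm_num)
  have key := key_induction H hH hcomplete h h0
  -- integrals over measurable rectangles vanish
  have hrect : ∀ A : Fin n → Set ℝ, (∀ j, MeasurableSet (A j)) →
      ∫ x in Set.univ.pi A, h x ∂Measure.pi ν = 0 := by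
    intro A hA
    set φ : ∀ j : Fin n, Lp ℝ 2 (ν j) :=
      fun j => indicatorConstLp 2 (hA j) (measure_ne_top (ν j) (A j)) (1 : ℝ) with hφ
    have h1 := key Finset.univ φ (fun _ => 0)
    simp only [Finset.mem_univ, if_true] at h1
    have hc : ∀ᵐ x ∂Measure.pi ν,
        ∀ j, (⇑(φ j)) (x j) = (A j).indicator (fun _ => (1:ℝ)) (x j) := by
      rw [ae_all_iff]
      intro j
      exact ae_comp (indicatorConstLp_coeFn)
    have h2 : ∫ x, Set.indicator (Set.univ.pi A) (fun _ => (1:ℝ)) x * h x ∂Measure.pi ν = 0 := by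
      rw [← h1]
      refine integral_congr_ae (hc.mono fun x hx => ?_)
      dsimp only
      congr 1
      rw [Finset.prod_congr rfl fun j (_ : j ∈ Finset.univ) => hx j]
      by_cases hmem : x ∈ Set.univ.pi A
      · have hj : ∀ j, x j ∈ A j := by simpa [Set.mem_pi] using hmem
        simp [Set.indicator_apply, hmem, hj]
      · obtain ⟨j, hj⟩ : ∃ j, x j ∉ A j := by simpa [Set.mem_pi] using hmem
        rw [Set.indicator_of_notMem hmem]
        exact (Finset.prod_eq_zero (Finset.mem_univ j)
          (by simp [Set.indicator_apply, hj])).symm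
    have h3 : ∫ x, Set.indicator (Set.univ.pi A) (fun _ => (1:ℝ)) x * h x ∂Measure.pi ν
        = ∫ x in Set.univ.pi A, h x ∂Measure.pi ν := by
      rw [← integral_indicator (MeasurableSet.univ_pi fun j => hA j)]
      refine integral_congr_ae (Filter.Eventually.of_forall fun x => ?_)
      by_cases hx : x ∈ Set.univ.pi A <;> simp [Set.indicator_apply, hx]
    rw [← h3]
    exact h2
  have huniv : ∫ x, h x ∂Measure.pi ν = 0 := by
    have := hrect (fun _ => Set.univ) (fun _ => MeasurableSet.univ)
    simpa using this
  -- extend to all measurable sets by the π-λ theorem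
  have hall : ∀ ⦃B : Set (Fin n → ℝ)⦄, MeasurableSet B →
      ∫ x in B, h x ∂Measure.pi ν = 0 := by
    refine MeasurableSpace.induction_on_inter
      (C := fun B _ => ∫ x in B, h x ∂Measure.pi ν = 0)
      generateFrom_pi.symm isPiSystem_pi ?_ ?_ ?_ ?_
    · simp
    · rintro _ ⟨A, hA, rfl⟩
      exact hrect A fun j => hA j (Set.mem_univ j)
    · intro t ht hC
      have hadd := integral_add_compl ht hInt
      rw [hC] at hadd
      rw [← huniv, ← hadd]
      ring
    · intro g hdisj hmeas hC
      rw [integral_iUnion hmeas hdisj hInt.integrableOn]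
      simp [hC]
  have hae : (⇑h) =ᵐ[Measure.pi ν] 0 :=
    Lp.ae_eq_zero_of_forall_setIntegral_eq_zero h (by norm_num) (by norm_num)
      (fun s _ _ => hInt.integrableOn) (fun s hs _ => hall hs)
  exact Lp.ext (hae.trans (Lp.coeFn_zero ℝ 2 (Measure.pi ν)).symm)



variable {n : ℕ} {ν : Fin n → Measure ℝ} [∀ j, IsProbabilityMeasure (ν j)]

lemma inner_toLp_left {α : Type*} [MeasurableSpace α] {μ : Measure α} {u : α → ℝ}
    (hu : MemLp u 2 μ) (v : Lp ℝ 2 μ) :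
    @inner ℝ _ _ (hu.toLp u) v = ∫ x, u x * v x ∂μ := by
  rw [L2.inner_def]
  exact integral_congr_ae (hu.coeFn_toLp.mono fun x hx => by
    simp [hx, RCLike.inner_apply, mul_comm])

-- multi-index arithmetic
lemma single_sum_one (j : Fin n) : ∑ i, Pi.single j 1 i = 1 := by
  classical
  have : ∀ i, Pi.single j 1 i = if i = j then 1 else 0 := fun i => Pi.single_apply j 1 i
  rw [Finset.sum_congr rfl fun i _ => this i, Finset.sum_ite_eq' Finset.univ j fun _ => 1]
  simp

lemma eq_single_of_sum_eq_one {m : Fin n → ℕ} (hm : ∑ j, m j = 1) :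
    ∃ j, m = Pi.single j 1 := by
  classical
  have hex : ∃ j, m j ≠ 0 := by
    by_contra hc
    push_neg at hc
    simp [hc] at hm
  obtain ⟨j, hj⟩ := hex
  have hsplit : m j + ∑ i ∈ Finset.univ.erase j, m i = 1 := by
    rw [Finset.add_sum_erase Finset.univ m (Finset.mem_univ j)]
    exact hm
  have hmj : m j = 1 := by omega
  have hrest : ∑ i ∈ Finset.univ.erase j, m i = 0 := by omega
  refine ⟨j, funext fun i => ?_⟩
  rw [Pi.single_apply]
  by_cases hij : i = j
  · subst hij; simpa using hmj
  · rw [if_neg hij]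
    exact (Finset.sum_eq_zero_iff.mp hrest) i (Finset.mem_erase.mpr ⟨hij, Finset.mem_univ i⟩)


end DIto

open DIto

set_option maxHeartbeats 1000000 in
/-- Discrete Itô formula for one step of a stochastic difference scheme
`X' = X + F(X, Δt, ΔW)` (conditional on `X = a`): with the innovation law
`μ = ν_1 ⊗ ⋯ ⊗ ν_n` (centered, square-integrable coordinates) and product orthonormal
bases as before, the function `x ↦ f(a + F(a, Δt, x)) - f(a)` expands in `L²(μ)` into
the explicit martingale terms, the drift term, and an `L²`-convergent series over
multi-indices of total degree `≥ 2`. -/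
theorem discrete_ito_formula_difference_scheme
    (n : ℕ) (ν : Fin n → Measure ℝ) [∀ j, IsProbabilityMeasure (ν j)]
    (hmean : ∀ j, ∫ x, x ∂(ν j) = 0)
    (hx2 : ∀ j, MemLp (fun x : ℝ => x) 2 (ν j))
    (hσpos : ∀ j, 0 < ∫ x, x ^ 2 ∂(ν j))
    (H : Fin n → ℕ → ℝ → ℝ)
    (hH : ∀ j l, MemLp (H j l) 2 (ν j))
    (horth : ∀ j, Orthonormal ℝ fun l => (hH j l).toLp (H j l))
    (hcomplete : ∀ j,
      (Submodule.span ℝ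
        (Set.range fun l => (hH j l).toLp (H j l))).topologicalClosure = ⊤)
    (hH0 : ∀ j, H j 0 =ᵐ[ν j] fun _ => 1)
    (hH1 : ∀ j, H j 1 =ᵐ[ν j] fun x => x / Real.sqrt (∫ x, x ^ 2 ∂(ν j)))
    (F : (Fin n → ℝ) → ℝ → (Fin n → ℝ) → (Fin n → ℝ))
    (hF : Measurable fun p : (Fin n → ℝ) × ℝ × (Fin n → ℝ) => F p.1 p.2.1 p.2.2)
    (Δt : ℝ) (hΔt : 0 < Δt) (a : Fin n → ℝ)
    (f : (Fin n → ℝ) → ℝ) (hf : Measurable f) (C : ℝ) (hfb : ∀ x, |f x| ≤ C) :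
    ∃ (hcoord : ∀ j, MemLp (fun x : Fin n → ℝ => x j) 2 (Measure.pi ν))
      (hg : MemLp (fun x : Fin n → ℝ => f (a + F a Δt x) - f a) 2 (Measure.pi ν))
      (hG : ∀ l : Fin n → ℕ,
        MemLp (fun x : Fin n → ℝ => ∏ j, H j (l j) (x j)) 2 (Measure.pi ν))
      (R : Lp ℝ 2 (Measure.pi ν)),
      HasSum
        (fun l : {m : Fin n → ℕ // 2 ≤ ∑ j, m j} =>
          (∫ y, f (a + F a Δt y) * ∏ j, H j (l.1 j) (y j) ∂(Measure.pi ν)) •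
            (hG l.1).toLp _) R ∧
      hg.toLp _ =
        (∑ j, ((∫ x, x ^ 2 ∂(ν j))⁻¹ * ∫ y, f (a + F a Δt y) * y j ∂(Measure.pi ν)) •
            (hcoord j).toLp _)
          + (∫ y, (f (a + F a Δt y) - f a) ∂(Measure.pi ν)) •
              (memLp_const (1 : ℝ)).toLp _
          + R := by
  classical
  have hmeas : Measurable fun x : Fin n → ℝ => f (a + F a Δt x) :=
    hf.comp (measurable_const.add (hF.comp (measurable_const.prodMk
      (measurable_const.prodMk measurable_id))))
  have hg' : MemLp (fun x : Fin n → ℝ => f (a + F a Δt x)) 2 (Measure.pi ν) :=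
    MemLp.of_bound hmeas.aestronglyMeasurable C
      (Filter.Eventually.of_forall fun x => by
        simpa [Real.norm_eq_abs] using hfb (a + F a Δt x))
  have hg : MemLp (fun x : Fin n → ℝ => f (a + F a Δt x) - f a) 2 (Measure.pi ν) :=
    MemLp.of_bound (hmeas.aestronglyMeasurable.sub aestronglyMeasurable_const) (C + C)
      (Filter.Eventually.of_forall fun x => by
        simpa [Real.norm_eq_abs] using
          (norm_sub_le (f (a + F a Δt x)) (f a)).trans
            (add_le_add (by simpa [Real.norm_eq_abs] using hfb (a + F a Δt x))
              (by simpa [Real.norm_eq_abs] using hfb a)))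
  have hcoord : ∀ j, MemLp (fun x : Fin n → ℝ => x j) 2 (Measure.pi ν) :=
    fun j => memLp_comp (hx2 j)
  have hG : ∀ l : Fin n → ℕ,
      MemLp (fun x : Fin n → ℝ => ∏ j, H j (l j) (x j)) 2 (Measure.pi ν) :=
    fun l => memLp_prod fun j => hH j (l j)
  set e : (Fin n → ℕ) → Lp ℝ 2 (Measure.pi ν) := fun l => (hG l).toLp _ with he
  set g : Lp ℝ 2 (Measure.pi ν) := hg.toLp _ with hgdef
  -- inner products of the product family
  have hfac : ∀ (l m : Fin n → ℕ) (j : Fin n),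
      ∫ t, H j (l j) t * H j (m j) t ∂ν j = if l j = m j then 1 else 0 := by
    intro l m j
    have := orthonormal_iff_ite.mp (horth j) (l j) (m j)
    rwa [inner_toLp (hH j (l j)) (hH j (m j))] at this
  have hinner : ∀ l m : Fin n → ℕ,
      @inner ℝ _ _ (e l) (e m) = if l = m then (1:ℝ) else 0 := by
    intro l m
    simp only [he]
    rw [inner_toLp (hG l) (hG m)]
    have hpt : ∀ x : Fin n → ℝ, (∏ j, H j (l j) (x j)) * (∏ j, H j (m j) (x j))
        = ∏ j, (H j (l j) (x j) * H j (m j) (x j)) :=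
      fun x => Finset.prod_mul_distrib.symm
    have hip := integral_prod (ν := ν) (fun j t => H j (l j) t * H j (m j) t)
    rw [integral_congr_ae (Filter.Eventually.of_forall hpt), hip,
      Finset.prod_congr rfl fun j _ => hfac l m j]
    by_cases hlm : l = m
    · subst hlm; simp
    · rw [if_neg hlm]
      obtain ⟨j, hj⟩ : ∃ j, l j ≠ m j := by
        by_contra hcon; push_neg at hcon; exact hlm (funext hcon)
      exact Finset.prod_eq_zero (Finset.mem_univ j) (if_neg hj)
  have honE : Orthonormal ℝ e := orthonormal_iff_ite.mpr hinner
  -- completeness of the product family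
  have hbot : (Submodule.span ℝ (Set.range e))ᗮ = ⊥ := by
    rw [Submodule.eq_bot_iff]
    intro v hv
    refine dense_zero H hH hcomplete v fun l => ?_
    have h1 : @inner ℝ _ _ (e l) v = 0 :=
      (Submodule.mem_orthogonal _ v).mp hv (e l) (Submodule.subset_span ⟨l, rfl⟩)
    simp only [he] at h1
    rwa [inner_toLp_left (hG l) v] at h1
  -- basis expansion
  have hsum0 : HasSum (fun l => (@inner ℝ _ _ (e l) g) • e l) g := by
    have hb := (HilbertBasis.mkOfOrthogonalEqBot honE hbot).hasSum_repr g
    have hco : ⇑(HilbertBasis.mkOfOrthogonalEqBot honE hbot) = e :=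
      HilbertBasis.coe_mkOfOrthogonalEqBot honE hbot
    have heq : (fun l => (HilbertBasis.mkOfOrthogonalEqBot honE hbot).repr g l
        • (HilbertBasis.mkOfOrthogonalEqBot honE hbot) l)
        = fun l => (@inner ℝ _ _ (e l) g) • e l := by
      funext l
      rw [HilbertBasis.repr_apply_apply, hco]
    rwa [heq] at hb
  -- coefficient values
  have hcval : ∀ l : Fin n → ℕ, @inner ℝ _ _ (e l) g
      = ∫ x, (∏ j, H j (l j) (x j)) * (f (a + F a Δt x) - f a) ∂Measure.pi ν := by
    intro l
    simp only [he, hgdef]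
    rw [inner_toLp (hG l) hg]
  have hG0ae : (fun x : Fin n → ℝ => ∏ j, H j 0 (x j))
      =ᵐ[Measure.pi ν] fun _ => (1:ℝ) := by
    have hc : ∀ᵐ x ∂Measure.pi ν, ∀ j, H j 0 (x j) = 1 := by
      rw [ae_all_iff]; intro j; exact ae_comp (hH0 j)
    exact hc.mono fun x hx => by
      dsimp only
      rw [Finset.prod_congr rfl fun j _ => hx j, Finset.prod_const_one]
  have hintG0 : ∀ l : Fin n → ℕ, l ≠ 0 →
      ∫ x, ∏ j, H j (l j) (x j) ∂Measure.pi ν = 0 := by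
    intro l hl
    have h1 : @inner ℝ _ _ (e 0) (e l) = 0 := by
      rw [hinner]; exact if_neg fun hc => hl hc.symm
    simp only [he] at h1
    rw [inner_toLp (hG 0) (hG l)] at h1
    rw [← h1]
    refine integral_congr_ae (hG0ae.mono fun x hx => ?_)
    simp only [Pi.zero_apply] at hx ⊢
    rw [hx, one_mul]
  have hcval2 : ∀ l : Fin n → ℕ, l ≠ 0 → @inner ℝ _ _ (e l) g
      = ∫ y, f (a + F a Δt y) * ∏ j, H j (l j) (y j) ∂Measure.pi ν := by
    intro l hl
    rw [hcval l]
    have hint1 : Integrable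
        (fun x : Fin n → ℝ => (∏ j, H j (l j) (x j)) * f (a + F a Δt x)) (Measure.pi ν) :=
      integrable_mul2 (hG l) hg'
    have hint2 : Integrable (fun x : Fin n → ℝ => ∏ j, H j (l j) (x j)) (Measure.pi ν) :=
      (hG l).integrable one_le_two
    have hsplit : ∀ x : Fin n → ℝ, (∏ j, H j (l j) (x j)) * (f (a + F a Δt x) - f a)
        = (∏ j, H j (l j) (x j)) * f (a + F a Δt x)
          - f a * (∏ j, H j (l j) (x j)) := fun x => by ring
    rw [integral_congr_ae (Filter.Eventually.of_forall hsplit),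
      integral_sub hint1 (hint2.const_mul (f a)), integral_const_mul, hintG0 l hl,
      mul_zero, sub_zero]
    exact integral_congr_ae (Filter.Eventually.of_forall fun x => mul_comm _ _)
  -- the distinguished finite set of small multi-indices
  set sfin : Finset (Fin n → ℕ) :=
    insert 0 (Finset.image (fun j => Pi.single j 1) Finset.univ) with hsfin
  have hmem_sfin : ∀ m : Fin n → ℕ, m ∈ sfin ↔ ¬ 2 ≤ ∑ j, m j := by
    intro m
    rw [hsfin]
    simp only [Finset.mem_insert, Finset.mem_image, Finset.mem_univ, true_and]
    constructor
    · rintro (rfl | ⟨j, rfl⟩)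
      · simp
      · rw [single_sum_one]; omega
    · intro hle
      have hcase : ∑ j, m j = 0 ∨ ∑ j, m j = 1 := by omega
      rcases hcase with h0 | h1
      · exact Or.inl (funext fun j =>
          (Finset.sum_eq_zero_iff.mp h0) j (Finset.mem_univ j))
      · obtain ⟨j, rfl⟩ := eq_single_of_sum_eq_one h1
        exact Or.inr ⟨j, rfl⟩
  have h0notim : (0 : Fin n → ℕ)
      ∉ Finset.image (fun j => Pi.single j 1) Finset.univ := by
    simp only [Finset.mem_image, Finset.mem_univ, true_and, not_exists]
    intro j hj
    have h2 := congrArg (fun m : Fin n → ℕ => ∑ i, m i) hj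
    simp only [single_sum_one] at h2
    simp at h2
  set R : Lp ℝ 2 (Measure.pi ν) :=
    g - ∑ l ∈ sfin, (@inner ℝ _ _ (e l) g) • e l with hR
  have hsum1 : HasSum
      (fun l : {x : Fin n → ℕ // x ∉ sfin} => (@inner ℝ _ _ (e l.1) g) • e l.1) R := by
    refine (Finset.hasSum_compl_iff (f := fun l : Fin n → ℕ =>
      (@inner ℝ _ _ (e l) g) • e l) sfin).mpr ?_
    rw [hR, sub_add_cancel]
    exact hsum0
  have hpred : ∀ m : Fin n → ℕ, m ∉ sfin ↔ 2 ≤ ∑ j, m j := fun m => by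
    rw [hmem_sfin]; exact not_not
  have hsum2 : HasSum
      (fun l : {m : Fin n → ℕ // 2 ≤ ∑ j, m j} => (@inner ℝ _ _ (e l.1) g) • e l.1) R :=
    ((Equiv.subtypeEquivRight hpred).hasSum_iff).mp hsum1
  have hsum3 : HasSum
      (fun l : {m : Fin n → ℕ // 2 ≤ ∑ j, m j} =>
        (∫ y, f (a + F a Δt y) * ∏ j, H j (l.1 j) (y j) ∂(Measure.pi ν)) •
          (hG l.1).toLp _) R := by
    have hfx : (fun l : {m : Fin n → ℕ // 2 ≤ ∑ j, m j} =>
        (∫ y, f (a + F a Δt y) * ∏ j, H j (l.1 j) (y j) ∂(Measure.pi ν)) •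
          (hG l.1).toLp (fun x => ∏ j, H j (l.1 j) (x j)))
        = fun l => (@inner ℝ _ _ (e l.1) g) • e l.1 := by
      funext l
      have hl0 : l.1 ≠ 0 := by
        intro hc
        have h2 := l.2
        rw [hc] at h2
        simp at h2
      rw [hcval2 l.1 hl0]
    rw [hfx]
    exact hsum2
  -- drift term
  have hdrift_e : e 0 = (memLp_const (1:ℝ)).toLp _ := by
    simp only [he]
    exact MemLp.toLp_congr (hG 0) (memLp_const 1)
      (by
        refine hG0ae.mono fun x hx => ?_
        simpa only [Pi.zero_apply] using hx)
  have hdrift_c : @inner ℝ _ _ (e 0) g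
      = ∫ y, (f (a + F a Δt y) - f a) ∂Measure.pi ν := by
    rw [hcval 0]
    refine integral_congr_ae (hG0ae.mono fun x hx => ?_)
    simp only [Pi.zero_apply] at hx ⊢
    rw [hx, one_mul]
  -- martingale terms
  have hmart : ∀ j : Fin n, (@inner ℝ _ _ (e (Pi.single j 1)) g) • e (Pi.single j 1)
      = ((∫ x, x ^ 2 ∂ν j)⁻¹ * ∫ y, f (a + F a Δt y) * y j ∂Measure.pi ν) •
          (hcoord j).toLp _ := by
    intro j
    have hsjpos : (0:ℝ) < Real.sqrt (∫ x, x ^ 2 ∂ν j) := Real.sqrt_pos.mpr (hσpos j)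
    have hGδae : (fun x : Fin n → ℝ => ∏ i, H i ((Pi.single j 1 : Fin n → ℕ) i) (x i))
        =ᵐ[Measure.pi ν] fun x => x j / Real.sqrt (∫ x, x ^ 2 ∂ν j) := by
      have hc : ∀ᵐ x ∂Measure.pi ν, ∀ i, H i ((Pi.single j 1 : Fin n → ℕ) i) (x i)
          = if i = j then x i / Real.sqrt (∫ t, t ^ 2 ∂ν i) else 1 := by
        rw [ae_all_iff]
        intro i
        by_cases hij : i = j
        · subst hij
          simp only [Pi.single_eq_same, if_pos rfl]
          exact ae_comp (hH1 i)
        · simp only [Pi.single_eq_of_ne hij, if_neg hij]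
          exact ae_comp (hH0 i)
      refine hc.mono fun x hx => ?_
      dsimp only
      rw [Finset.prod_congr rfl fun i _ => hx i,
        ← Finset.mul_prod_erase Finset.univ _ (Finset.mem_univ j), if_pos rfl,
        Finset.prod_congr rfl fun i hi => if_neg (Finset.ne_of_mem_erase hi),
        Finset.prod_const_one, mul_one]
    have hsmul : MemLp ((Real.sqrt (∫ x, x ^ 2 ∂ν j))⁻¹ • fun x : Fin n → ℝ => x j)
        2 (Measure.pi ν) := (hcoord j).const_smul _
    have heδ : e (Pi.single j 1)
        = (Real.sqrt (∫ x, x ^ 2 ∂ν j))⁻¹ • (hcoord j).toLp _ := by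
      simp only [he]
      rw [MemLp.toLp_congr (hG (Pi.single j 1)) hsmul
        (hGδae.mono fun x hx => by
          rw [hx]
          simp [div_eq_inv_mul]),
        MemLp.toLp_const_smul]
    have hIj : ∫ x : Fin n → ℝ, x j ∂Measure.pi ν = 0 := by
      rw [integral_comp (hx2 j).aestronglyMeasurable]
      exact hmean j
    have hinnerX : @inner ℝ _ _ ((hcoord j).toLp (fun x : Fin n → ℝ => x j)) g
        = ∫ y, f (a + F a Δt y) * y j ∂Measure.pi ν := by
      rw [hgdef, inner_toLp (hcoord j) hg]
      have hint1 : Integrable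
          (fun x : Fin n → ℝ => x j * f (a + F a Δt x)) (Measure.pi ν) :=
        integrable_mul2 (hcoord j) hg'
      have hint2 : Integrable (fun x : Fin n → ℝ => x j) (Measure.pi ν) :=
        (hcoord j).integrable one_le_two
      have hsplit : ∀ x : Fin n → ℝ, x j * (f (a + F a Δt x) - f a)
          = x j * f (a + F a Δt x) - f a * x j := fun x => by ring
      rw [integral_congr_ae (Filter.Eventually.of_forall hsplit),
        integral_sub hint1 (hint2.const_mul (f a)), integral_const_mul, hIj,
        mul_zero, sub_zero]
      exact integral_congr_ae (Filter.Eventually.of_forall fun x => mul_comm _ _)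
    rw [heδ, real_inner_smul_left, hinnerX, smul_smul]
    congr 1
    have hs2 : Real.sqrt (∫ x, x ^ 2 ∂ν j) * Real.sqrt (∫ x, x ^ 2 ∂ν j)
        = ∫ x, x ^ 2 ∂ν j := Real.mul_self_sqrt (hσpos j).le
    have h2 : (Real.sqrt (∫ x, x ^ 2 ∂ν j))⁻¹
          * (∫ y, f (a + F a Δt y) * y j ∂Measure.pi ν)
          * (Real.sqrt (∫ x, x ^ 2 ∂ν j))⁻¹
        = (Real.sqrt (∫ x, x ^ 2 ∂ν j) * Real.sqrt (∫ x, x ^ 2 ∂ν j))⁻¹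
          * ∫ y, f (a + F a Δt y) * y j ∂Measure.pi ν := by
      rw [mul_inv]; ring
    rw [h2, hs2]
  -- the finite part of the expansion
  have hinj : ∀ i ∈ Finset.univ, ∀ j ∈ Finset.univ,
      (fun j : Fin n => (Pi.single j 1 : Fin n → ℕ)) i = (fun j : Fin n => (Pi.single j 1 : Fin n → ℕ)) j
      → i = j := by
    intro i _ j _ hij
    by_contra hne
    have h2 := congrArg (fun m : Fin n → ℕ => m i) hij
    simp only [Pi.single_eq_same, Pi.single_eq_of_ne hne] at h2
    exact absurd h2 one_ne_zero
  have hsfin_sum : ∑ l ∈ sfin, (@inner ℝ _ _ (e l) g) • e l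
      = (∑ j, ((∫ x, x ^ 2 ∂ν j)⁻¹ * ∫ y, f (a + F a Δt y) * y j ∂Measure.pi ν) •
          (hcoord j).toLp _)
        + (∫ y, (f (a + F a Δt y) - f a) ∂Measure.pi ν) •
            (memLp_const (1:ℝ)).toLp _ := by
    rw [hsfin, Finset.sum_insert h0notim, Finset.sum_image hinj,
      hdrift_c, hdrift_e, Finset.sum_congr rfl fun j _ => hmart j]
    abel
  refine ⟨hcoord, hg, hG, R, hsum3, ?_⟩
  rw [← hgdef, ← hsfin_sum, hR]
  abel
end

section
/- Let n ≥ 2. There is no probability measure μ on ℝⁿ whose support has cardinality at most n+1 and which matches the moments of the standard n-dimensional Gaussian distribution up to degree three, i.e., which satisfies ∫ x_i μ(dx) = 0 for all i, ∫ x_i x_j μ(dx) = δ_{ij} for all i, j, and ∫ x_i x_j x_k μ(dx) = 0 for all i, j, k in {1, …, n}. -/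
/-!
Write `w s` for the weights and `x s` for the atoms. The moment conditions of order at most two
say that the matrix `X` with rows `(1, x s)` satisfies `Xᵀ diag(w) X = 1`. Hence there are at least
`n + 1` atoms; with exactly `n + 1` the matrix `X` is square, so also `diag(w) X Xᵀ = 1`, that is
`w s (1 + |x s|²) = 1` and `⟨x s, x t⟩ = -1` for `s ≠ t`. The third moments, tested against
`⟨·, x t⟩³`, give `w t |x t|⁶ = 1 - w t = w t |x t|²`. So `|x t|² ∈ {0, 1}` and `w t ≥ 1/2` for
every atom, and `n + 1 ≥ 3` such weights cannot sum to one.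
-/

open MeasureTheory Matrix

theorem Matrix.card_le_of_mul_eq_one {m n R : Type*} [Fintype m] [Fintype n] [DecidableEq m]
    [CommRing R] [Nontrivial R] {A : Matrix m n R} {B : Matrix n m R} (h : A * B = 1) :
    Fintype.card m ≤ Fintype.card n :=
  calc Fintype.card m = (A * B).rank := by rw [h, rank_one]
    _ ≤ A.rank := rank_mul_le_left A B
    _ ≤ Fintype.card n := rank_le_card_width A

def homogenize {ι : Type*} (y : ι → ℝ) : Option ι → ℝ := fun r => r.elim 1 y

theorem homogenize_dotProduct {ι : Type*} [Fintype ι] (a b : ι → ℝ) :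
    homogenize a ⬝ᵥ homogenize b = 1 + a ⬝ᵥ b := by
  simp [dotProduct, homogenize, Fintype.sum_option]

variable {ι σ : Type*} [DecidableEq ι] [Fintype σ]

structure IsDegreeThreeGaussianCubature (w : σ → ℝ) (x : σ → ι → ℝ) : Prop where
  weight_nonneg : ∀ s, 0 ≤ w s
  sum_weight_eq_one : ∑ s, w s = 1
  first_moment : ∀ i, ∑ s, w s * x s i = 0
  second_moment : ∀ i j, ∑ s, w s * (x s i * x s j) = if i = j then 1 else 0
  third_moment : ∀ i j k, ∑ s, w s * (x s i * x s j * x s k) = 0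

namespace IsDegreeThreeGaussianCubature

variable {w : σ → ℝ} {x : σ → ι → ℝ}

theorem transpose_mul_diagonal_mul_eq_one [DecidableEq σ]
    (h : IsDegreeThreeGaussianCubature w x) :
    (of fun s => homogenize (x s))ᵀ * diagonal w * of (fun s => homogenize (x s)) = 1 := by
  ext r r'
  rw [mul_apply]
  simp only [mul_diagonal, transpose_apply, of_apply]
  rcases r with _ | i <;> rcases r' with _ | j
  · simp [homogenize, h.sum_weight_eq_one]
  · simp [homogenize, h.first_moment]
  · simp [homogenize, mul_comm, h.first_moment]
  · simp only [homogenize, Option.elim_some, one_apply, Option.some.injEq, ← h.second_moment]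
    exact Finset.sum_congr rfl fun _ _ => by ring

theorem card_add_one_le_card [Fintype ι] (h : IsDegreeThreeGaussianCubature w x) :
    Fintype.card ι + 1 ≤ Fintype.card σ := by
  classical
  simpa using card_le_of_mul_eq_one
    ((Matrix.mul_assoc _ _ _).symm.trans h.transpose_mul_diagonal_mul_eq_one)

theorem weight_mul_one_add_dotProduct [Fintype ι] [DecidableEq σ]
    (h : IsDegreeThreeGaussianCubature w x) (hcard : Fintype.card σ ≤ Fintype.card ι + 1)
    (s t : σ) : w s * (1 + x s ⬝ᵥ x t) = if s = t then 1 else 0 := by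
  have hX := h.transpose_mul_diagonal_mul_eq_one
  rw [Matrix.mul_assoc] at hX
  have hsquare : Fintype.card (Option ι) = Fintype.card σ := by
    simpa using le_antisymm h.card_add_one_le_card hcard
  have hst := congrFun (congrFun ((mul_eq_one_comm_of_card_eq _ _ _ hsquare).mp hX) s) t
  rw [Matrix.mul_assoc, diagonal_mul, mul_apply', one_apply] at hst
  rwa [← homogenize_dotProduct]

theorem sum_mul_dotProduct_pow_three [Fintype ι] (h : IsDegreeThreeGaussianCubature w x)
    (y : ι → ℝ) : ∑ s, w s * (x s ⬝ᵥ y) ^ 3 = 0 :=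
  calc ∑ s, w s * (x s ⬝ᵥ y) ^ 3
      = ∑ s, ∑ i, ∑ j, ∑ k, y i * y j * y k * (w s * (x s i * x s j * x s k)) := by
        refine Finset.sum_congr rfl fun s _ => ?_
        rw [pow_three, dotProduct, Finset.sum_mul_sum, Finset.sum_mul_sum, Finset.mul_sum]
        simp only [Finset.mul_sum]
        exact Finset.sum_congr rfl fun i _ => Finset.sum_congr rfl fun j _ =>
          Finset.sum_congr rfl fun k _ => by ring
    _ = ∑ i, ∑ j, ∑ k, y i * y j * y k * ∑ s, w s * (x s i * x s j * x s k) := by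
        simp only [Finset.mul_sum]
        rw [Finset.sum_comm]
        refine Finset.sum_congr rfl fun _ _ => ?_
        rw [Finset.sum_comm]
        exact Finset.sum_congr rfl fun _ _ => Finset.sum_comm
    _ = 0 := by simp [h.third_moment]

variable [Fintype ι] (h : IsDegreeThreeGaussianCubature w x)
  (hcard : Fintype.card σ ≤ Fintype.card ι + 1)
include h hcard

theorem weight_mul_one_add_dotProduct_self (s : σ) : w s * (1 + x s ⬝ᵥ x s) = 1 := by
  classical
  simpa using h.weight_mul_one_add_dotProduct hcard s s

theorem dotProduct_eq_neg_one {s t : σ} (hst : s ≠ t) : x s ⬝ᵥ x t = -1 := by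
  classical
  have hw : w s ≠ 0 := left_ne_zero_of_mul_eq_one (h.weight_mul_one_add_dotProduct_self hcard s)
  have hzero := h.weight_mul_one_add_dotProduct hcard s t
  rw [if_neg hst] at hzero
  linarith [(mul_eq_zero.mp hzero).resolve_left hw]

theorem one_half_le_weight (t : σ) : 1 / 2 ≤ w t := by
  classical
  set Q := x t ⬝ᵥ x t
  have hQ : 0 ≤ Q := Finset.sum_nonneg fun i _ => mul_self_nonneg (x t i)
  have hsq : w t * (1 + Q) = 1 := h.weight_mul_one_add_dotProduct_self hcard t
  have hcube : w t * Q ^ 3 = 1 - w t := by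
    have hsplit := h.sum_mul_dotProduct_pow_three (x t)
    rw [Fintype.sum_eq_add_sum_compl t] at hsplit
    have hothers : ∑ s ∈ {t}ᶜ, w s * (x s ⬝ᵥ x t) ^ 3 = -∑ s ∈ {t}ᶜ, w s := by
      rw [← Finset.sum_neg_distrib]
      refine Finset.sum_congr rfl fun s hs => ?_
      rw [h.dotProduct_eq_neg_one hcard (by simpa using hs)]
      ring
    have hrest : ∑ s ∈ {t}ᶜ, w s = 1 - w t := by
      rw [← h.sum_weight_eq_one, Fintype.sum_eq_add_sum_compl t]
      ring
    linarith
  have hQ3 : Q ^ 3 = Q := mul_left_cancel₀ (left_ne_zero_of_mul_eq_one hsq) (by linarith)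
  have hQ1 : Q ≤ 1 := by
    have hroots : Q * ((Q - 1) * (Q + 1)) = 0 := by linear_combination hQ3
    rcases mul_eq_zero.mp hroots with hQ0 | hQ0
    · linarith
    · rcases mul_eq_zero.mp hQ0 with hQ0 | hQ0 <;> linarith
  nlinarith

theorem card_le_one : Fintype.card ι ≤ 1 := by
  have hsum : (Fintype.card σ : ℝ) * (1 / 2) ≤ 1 := by
    simpa [h.sum_weight_eq_one] using Finset.card_nsmul_le_sum Finset.univ w (1 / 2)
      fun t _ => h.one_half_le_weight hcard t
  have hσ : (Fintype.card ι : ℝ) + 1 ≤ Fintype.card σ := by exact_mod_cast h.card_add_one_le_card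
  have hι : (Fintype.card ι : ℝ) ≤ 1 := by linarith
  exact_mod_cast hι

end IsDegreeThreeGaussianCubature

theorem integral_eq_sum_of_measure_compl_eq_zero {α E : Type*} [MeasurableSpace α]
    [MeasurableSingletonClass α] [NormedAddCommGroup E] [NormedSpace ℝ E] [CompleteSpace E]
    {μ : Measure α} [IsFiniteMeasure μ] {S : Finset α} (hS : μ (↑S)ᶜ = 0) (f : α → E) :
    ∫ x, f x ∂μ = ∑ x ∈ S, μ.real {x} • f x := by
  rw [← setIntegral_finset S IntegrableOn.finset, Measure.restrict_eq_self_of_ae_mem]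
  exact mem_ae_iff.mpr hS

/-- For `n ≥ 2`, no probability measure on `ℝⁿ` supported on at most `n+1` points can
match the moments of the standard `n`-dimensional Gaussian up to degree three:
`∫ xᵢ dμ = 0`, `∫ xᵢxⱼ dμ = δᵢⱼ`, and `∫ xᵢxⱼx_k dμ = 0`. -/
theorem no_small_support_third_moment_match (n : ℕ) (hn : 2 ≤ n) :
    ¬ ∃ μ : Measure (Fin n → ℝ), IsProbabilityMeasure μ ∧
      (∃ S : Finset (Fin n → ℝ), S.card ≤ n + 1 ∧ μ (↑S : Set (Fin n → ℝ))ᶜ = 0) ∧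
      (∀ i, ∫ x, x i ∂μ = 0) ∧
      (∀ i j, ∫ x, x i * x j ∂μ = if i = j then 1 else 0) ∧
      (∀ i j k, ∫ x, x i * x j * x k ∂μ = 0) := by
  rintro ⟨μ, hμ, ⟨S, hcard, hS⟩, hm1, hm2, hm3⟩
  have hsum (f : (Fin n → ℝ) → ℝ) : ∫ y, f y ∂μ = ∑ s : S, μ.real {↑s} * f s := by
    rw [integral_eq_sum_of_measure_compl_eq_zero hS, ← Finset.sum_coe_sort]
    rfl
  have hcub : IsDegreeThreeGaussianCubature (fun s : S => μ.real {↑s})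
      (fun s => (s : Fin n → ℝ)) :=
    { weight_nonneg := fun _ => measureReal_nonneg
      sum_weight_eq_one := by simpa using (hsum fun _ => 1).symm
      first_moment := fun i => (hsum _).symm.trans (hm1 i)
      second_moment := fun i j => (hsum _).symm.trans (hm2 i j)
      third_moment := fun i j k => (hsum _).symm.trans (hm3 i j k) }
  have hdim := hcub.card_le_one (by rwa [Fintype.card_coe, Fintype.card_fin])
  rw [Fintype.card_fin] at hdim
  omega
end
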